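/- Let P be a normal logic program and 𝔄_P = (A_P, Att_P) its associated SETAF. Then a labelling L is a semi-stable labelling of 𝔄_P if and only if L2I_P(L) is an L-stable model of P. -/
import Mathlib


/-- A rule of a normal logic program:
`head ← bodyPos, not bodyNeg`. -/
structure Rule (α : Type) where
  head : α
  bodyPos : Finset α
  bodyNeg : Finset α
deriving DecidableEq

/-- A normal logic program (NLP): a finite set of rules. -/
abbrev NLP (α : Type) := Finset (Rule α)

variable {α : Type} [DecidableEq α]

/-- The atoms occurring in a rule. -/
def Rule.atoms (r : Rule α) : Finset α :=
  insert r.head (r.bodyPos ∪ r.bodyNeg)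

/-- The Herbrand base of a program: all atoms occurring in it. -/
def HB (P : NLP α) : Finset α := P.sup Rule.atoms

/-- A three-valued interpretation, given by its sets of true and false atoms. -/
structure Interp (α : Type) where
  T : Set α
  F : Set α

/-- `I` is a 3-valued interpretation over the Herbrand base `H`. -/
def IsInterp (H : Finset α) (I : Interp α) : Prop :=
  I.T ⊆ ↑H ∧ I.F ⊆ ↑H ∧ Disjoint I.T I.F

/-- A rule of a positive program obtained as a reduct; `hasU` records whether
the special atom `u` (undefined in every interpretation) occurs in its body. -/
structure PosRule (α : Type) where
  head : α
  bodyPos : Finset α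
  hasU : Prop

/-- The reduct `P/I`: delete every rule whose negative body meets `I.T`,
delete each `not b` with `b ∈ I.F`, and replace the remaining negative
literals by the special atom `u`. -/
def reduct (P : NLP α) (I : Interp α) : Set (PosRule α) :=
  { q | ∃ r ∈ P, (∀ b ∈ r.bodyNeg, b ∉ I.T) ∧
        q.head = r.head ∧ q.bodyPos = r.bodyPos ∧
        (q.hasU ↔ ∃ b ∈ r.bodyNeg, b ∉ I.F) }

/-- The `Ψ` operator of a positive program `Q` relative to the Herbrand base
`H`; the special atom `u` is neither true nor false in any interpretation. -/
def PsiOp (H : Finset α) (Q : Set (PosRule α)) (J : Interp α) : Interp α where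
  T := { c | c ∈ H ∧ ∃ q ∈ Q, q.head = c ∧ ¬ q.hasU ∧ ∀ a ∈ q.bodyPos, a ∈ J.T }
  F := { c | c ∈ H ∧ ∀ q ∈ Q, q.head = c → ∃ a ∈ q.bodyPos, a ∈ J.F }

/-- Iteration of `Ψ` starting from `⟨∅, H⟩`. -/
def PsiIter (H : Finset α) (Q : Set (PosRule α)) : ℕ → Interp α
  | 0 => ⟨∅, ↑H⟩
  | n + 1 => PsiOp H Q (PsiIter H Q n)

/-- `Ω_P(I)`: the least three-valued model of the reduct `P/I`,
obtained as the `ω`-iteration of `Ψ`. -/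
def OmegaOp (H : Finset α) (P : NLP α) (I : Interp α) : Interp α where
  T := ⋃ n, (PsiIter H (reduct P I) n).T
  F := ⋂ n, (PsiIter H (reduct P I) n).F

/-- `I` is a partial stable model of `P` (over Herbrand base `H`). -/
def IsPSModel (H : Finset α) (P : NLP α) (I : Interp α) : Prop :=
  IsInterp H I ∧ OmegaOp H P I = I

/-- Well-founded model: a partial stable model with `⊆`-minimal true part. -/
def IsWFModel (H : Finset α) (P : NLP α) (I : Interp α) : Prop :=
  IsPSModel H P I ∧ ∀ J, IsPSModel H P J → ¬ J.T ⊂ I.T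

/-- Regular model: a partial stable model with `⊆`-maximal true part. -/
def IsRegularModel (H : Finset α) (P : NLP α) (I : Interp α) : Prop :=
  IsPSModel H P I ∧ ∀ J, IsPSModel H P J → ¬ I.T ⊂ J.T

/-- Stable model: a partial stable model with `T ∪ F = H`. -/
def IsStableModel (H : Finset α) (P : NLP α) (I : Interp α) : Prop :=
  IsPSModel H P I ∧ I.T ∪ I.F = ↑H

/-- L-stable model: a partial stable model with `⊆`-maximal `T ∪ F`. -/
def IsLStableModel (H : Finset α) (P : NLP α) (I : Interp α) : Prop :=
  IsPSModel H P I ∧ ∀ J, IsPSModel H P J → ¬ (I.T ∪ I.F) ⊂ (J.T ∪ J.F)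

/-- `IsStatement P c V R`: there is a statement of `P` with conclusion `c`,
vulnerabilities `V` and rules `R`.  A statement is built from a rule
`r = c ← a₁,…,a_m, not b₁,…,not b_n ∈ P` together with statements `sᵢ` for the
positive body atoms `aᵢ` (with `r` not among their rules); its vulnerabilities
are `Vul(s₁) ∪ … ∪ Vul(s_m) ∪ {b₁,…,b_n}` and its rules are
`Rules(s₁) ∪ … ∪ Rules(s_m) ∪ {r}`. -/
inductive IsStatement (P : NLP α) : α → Finset α → Finset (Rule α) → Prop where
  | mk (r : Rule α) (hr : r ∈ P) (v : α → Finset α) (ρ : α → Finset (Rule α))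
      (hsub : ∀ a ∈ r.bodyPos, IsStatement P a (v a) (ρ a))
      (hnr : ∀ a ∈ r.bodyPos, r ∉ ρ a) :
      IsStatement P r.head (r.bodyPos.biUnion v ∪ r.bodyNeg)
        (insert r (r.bodyPos.biUnion ρ))

/-- `c` is an argument of `P`: it is the conclusion of some statement. -/
def IsArg (P : NLP α) (c : α) : Prop := ∃ V R, IsStatement P c V R

open Classical in
/-- The set `A_P` of arguments of `P`. -/
noncomputable def argsOf (P : NLP α) : Finset α := (HB P).filter (IsArg P)

/-- `B` meets every vulnerability set of `a` in `P`. -/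
def HitsVul (P : NLP α) (B : Finset α) (a : α) : Prop :=
  ∀ V R, IsStatement P a V R → ∃ b ∈ B, b ∈ V

/-- A SETAF: a finite set of arguments and an attack relation between
finite sets of arguments and arguments. -/
structure SETAF (α : Type) where
  args : Finset α
  att : Finset α → α → Prop

/-- Well-formedness of a SETAF: attackers are nonempty sets of arguments
attacking arguments, and attacking sets are `⊆`-minimal. -/
def SETAF.Wf (S : SETAF α) : Prop :=
  (∀ B a, S.att B a → B.Nonempty ∧ B ⊆ S.args ∧ a ∈ S.args) ∧
  (∀ B a, S.att B a → ∀ B', B' ⊂ B → ¬ S.att B' a)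

/-- The SETAF `𝔄_P` associated with an NLP `P`: its arguments are the
conclusions of the statements of `P`, and `B` attacks `a` iff `B` is a
`⊆`-minimal set of arguments meeting every vulnerability set of `a`. -/
noncomputable def setafOf (P : NLP α) : SETAF α where
  args := argsOf P
  att := fun B a =>
    B ⊆ argsOf P ∧ a ∈ argsOf P ∧ HitsVul P B a ∧ ∀ B', B' ⊂ B → ¬ HitsVul P B' a

/-- Labels for arguments. -/
inductive Lab : Type
  | inn | out | und
deriving DecidableEq

/-- `in(L)`. -/
def labIn (S : SETAF α) (L : α → Lab) : Set α := { a | a ∈ S.args ∧ L a = Lab.inn }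

/-- `out(L)`. -/
def labOut (S : SETAF α) (L : α → Lab) : Set α := { a | a ∈ S.args ∧ L a = Lab.out }

/-- `undec(L)`. -/
def labUnd (S : SETAF α) (L : α → Lab) : Set α := { a | a ∈ S.args ∧ L a = Lab.und }

/-- Admissible labelling. -/
def AdmissibleLab (S : SETAF α) (L : α → Lab) : Prop :=
  ∀ a ∈ S.args,
    (L a = Lab.inn → ∀ B, S.att B a → ∃ b ∈ B, L b = Lab.out) ∧
    (L a = Lab.out → ∃ B, S.att B a ∧ ∀ b ∈ B, L b = Lab.inn)

/-- Complete labelling. -/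
def CompleteLab (S : SETAF α) (L : α → Lab) : Prop :=
  AdmissibleLab S L ∧
  ∀ a ∈ S.args, L a = Lab.und →
    (∃ B, S.att B a ∧ ∀ b ∈ B, L b ≠ Lab.out) ∧
    (∀ B, S.att B a → ∃ b ∈ B, L b ≠ Lab.inn)

/-- Grounded labelling: complete with `⊆`-minimal `in(L)`. -/
def GroundedLab (S : SETAF α) (L : α → Lab) : Prop :=
  CompleteLab S L ∧ ∀ L', CompleteLab S L' → ¬ labIn S L' ⊂ labIn S L

/-- Preferred labelling: complete with `⊆`-maximal `in(L)`. -/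
def PreferredLab (S : SETAF α) (L : α → Lab) : Prop :=
  CompleteLab S L ∧ ∀ L', CompleteLab S L' → ¬ labIn S L ⊂ labIn S L'

/-- Stable labelling: complete with `undec(L) = ∅`. -/
def StableLab (S : SETAF α) (L : α → Lab) : Prop :=
  CompleteLab S L ∧ labUnd S L = ∅

/-- Semi-stable labelling: complete with `⊆`-minimal `undec(L)`. -/
def SemiStableLab (S : SETAF α) (L : α → Lab) : Prop :=
  CompleteLab S L ∧ ∀ L', CompleteLab S L' → ¬ labUnd S L' ⊂ labUnd S L

/-- `L2I_P`: the interpretation associated with a labelling of `𝔄_P`. -/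
def L2I (P : NLP α) (L : α → Lab) : Interp α where
  T := { c | c ∈ HB P ∧ c ∈ argsOf P ∧ L c = Lab.inn }
  F := { c | c ∈ HB P ∧ (c ∉ argsOf P ∨ (c ∈ argsOf P ∧ L c = Lab.out)) }

open Classical in
/-- `I2L`: the labelling associated with an interpretation (meaningful on
the arguments). -/
noncomputable def I2L (I : Interp α) : α → Lab := fun c =>
  if c ∈ I.T then Lab.inn else if c ∈ I.F then Lab.out else Lab.und

/-- `L2I_𝔄`: the interpretation `⟨in(L), out(L)⟩` associated with a labelling
of a SETAF `𝔄`. -/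
def L2Iset (S : SETAF α) (L : α → Lab) : Interp α := ⟨labIn S L, labOut S L⟩

/-- `V` meets every attacker of `a` in `S`. -/
def HitsAtt (S : SETAF α) (a : α) (V : Finset α) : Prop :=
  ∀ B, S.att B a → ∃ b ∈ B, b ∈ V

/-- `V ∈ V_a`: a `⊆`-minimal set of arguments meeting every attacker of `a`. -/
def MemVa (S : SETAF α) (a : α) (V : Finset α) : Prop :=
  V ⊆ S.args ∧ HitsAtt S a V ∧ ∀ V', V' ⊂ V → ¬ HitsAtt S a V'

open Classical in
/-- The NLP `P_𝔄` associated with a SETAF `𝔄`: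
`{ a ← not b₁,…,not b_n | a ∈ A, {b₁,…,b_n} ∈ V_a }`. -/
noncomputable def nlpOf (S : SETAF α) : NLP α :=
  ((S.args ×ˢ S.args.powerset).filter (fun p => MemVa S p.1 p.2)).image
    (fun p => { head := p.1, bodyPos := ∅, bodyNeg := p.2 })

/-- Redundancy-Free Atomic Logic Program: every rule is atomic (no positive
body), every atom is a head, and no rule's negative body strictly contains
that of another rule with the same head. -/
def IsRFALP (P : NLP α) : Prop :=
  (∀ r ∈ P, r.bodyPos = ∅) ∧
  HB P = P.image Rule.head ∧
  ∀ r ∈ P, ∀ r' ∈ P, r'.head = r.head → ¬ r'.bodyNeg ⊂ r.bodyNeg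

/-- Unfolding: replace a rule `c ← a, a₁,…,a_m, not b₁,…,not b_n` by all rules
obtained by resolving `a` against the rules of the program with head `a`. -/
def StepU (P₁ P₂ : NLP α) : Prop :=
  ∃ r ∈ P₁, ∃ a ∈ r.bodyPos,
    P₂ = P₁.erase r ∪
      (P₁.filter (fun r' => r'.head = a)).image
        (fun r' => { head := r.head,
                     bodyPos := r'.bodyPos ∪ r.bodyPos.erase a,
                     bodyNeg := r'.bodyNeg ∪ r.bodyNeg })

/-- Elimination of tautologies: delete a rule whose head occurs in its
positive body. -/
def StepT (P₁ P₂ : NLP α) : Prop :=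
  ∃ r ∈ P₁, r.head ∈ r.bodyPos ∧ P₂ = P₁.erase r

/-- Positive reduction: delete a literal `not b` from the body of a rule,
where `b` is not the head of any rule of the program. -/
def StepP (P₁ P₂ : NLP α) : Prop :=
  ∃ r ∈ P₁, ∃ b ∈ r.bodyNeg, (∀ r' ∈ P₁, r'.head ≠ b) ∧
    P₂ = insert { head := r.head, bodyPos := r.bodyPos,
                  bodyNeg := r.bodyNeg.erase b } (P₁.erase r)

/-- Elimination of non-minimal rules: delete a rule subsumed by a distinct
rule with the same head and smaller bodies. -/
def StepM (P₁ P₂ : NLP α) : Prop :=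
  ∃ r ∈ P₁, ∃ r' ∈ P₁, r ≠ r' ∧ r'.head = r.head ∧
    r'.bodyPos ⊆ r.bodyPos ∧ r'.bodyNeg ⊆ r.bodyNeg ∧ P₂ = P₁.erase r

/-- `↦_UTPM`: the union of the four transformations. -/
def StepUTPM (P₁ P₂ : NLP α) : Prop :=
  StepU P₁ P₂ ∨ StepT P₁ P₂ ∨ StepP P₁ P₂ ∨ StepM P₁ P₂

/-- `P` is irreducible w.r.t. `↦_UTPM`: there is no `P' ≠ P` with
`P ↦_UTPM P'`. -/
def UTPMIrreducible (P : NLP α) : Prop :=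
  ¬ ∃ P', StepUTPM P P' ∧ P' ≠ P


/- ===================== Auxiliary development ===================== -/
set_option linter.unusedSectionVars false

section Aux
variable {P : NLP α}

lemma mem_HB_of_mem_atoms {r : Rule α} (hr : r ∈ P) {a : α}
    (ha : a ∈ r.atoms) : a ∈ HB P := Finset.mem_sup.2 ⟨r, hr, ha⟩

lemma head_mem_HB {r : Rule α} (hr : r ∈ P) : r.head ∈ HB P :=
  mem_HB_of_mem_atoms hr (by simp [Rule.atoms])

lemma bodyNeg_mem_HB {r : Rule α} (hr : r ∈ P) {b : α} (hb : b ∈ r.bodyNeg) :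
    b ∈ HB P := mem_HB_of_mem_atoms hr (by simp [Rule.atoms, hb])

lemma bodyPos_mem_HB {r : Rule α} (hr : r ∈ P) {b : α} (hb : b ∈ r.bodyPos) :
    b ∈ HB P := mem_HB_of_mem_atoms hr (by simp [Rule.atoms, hb])

lemma stmt_head_mem_HB {c V R} (h : IsStatement P c V R) : c ∈ HB P := by
  cases h with
  | mk r hr v ρ hsub hnr => exact head_mem_HB hr

lemma stmt_vul_subset_HB {c V R} (h : IsStatement P c V R) : V ⊆ HB P := by
  induction h with
  | mk r hr v ρ hsub hnr ih =>
    intro b hb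
    rcases Finset.mem_union.1 hb with hb | hb
    · rcases Finset.mem_biUnion.1 hb with ⟨a, ha, hba⟩
      exact ih a ha hba
    · exact bodyNeg_mem_HB hr hb

lemma stmt_rules_subset {c V R} (h : IsStatement P c V R) : R ⊆ P := by
  induction h with
  | mk r hr v ρ hsub hnr ih =>
    intro x hx
    rcases Finset.mem_insert.1 hx with rfl | hx
    · exact hr
    · rcases Finset.mem_biUnion.1 hx with ⟨a, ha, hxa⟩
      exact ih a ha hxa

lemma stmt_mono {P' : NLP α} {c V R} (h : IsStatement P c V R) (hPP : P ⊆ P') :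
    IsStatement P' c V R := by
  induction h with
  | mk r hr v ρ hsub hnr ih =>
    exact IsStatement.mk r (hPP hr) v ρ (fun a ha => ih a ha) hnr

end Aux

/-- Stages of derivability with vulnerabilities inside `W`. -/
def DStage (P : NLP α) (W : Set α) : ℕ → Set α
  | 0 => ∅
  | n + 1 => DStage P W n ∪
      {c | ∃ r ∈ P, r.head = c ∧ ↑r.bodyNeg ⊆ W ∧ ↑r.bodyPos ⊆ DStage P W n}

/-- Limit of the derivability stages. -/
def Dlim (P : NLP α) (W : Set α) : Set α := ⋃ n, DStage P W n

section DStageLemmas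
variable {P : NLP α} {W : Set α}

lemma DStage_mono_succ (n : ℕ) : DStage P W n ⊆ DStage P W (n + 1) :=
  Set.subset_union_left

lemma DStage_mono {m n : ℕ} (h : m ≤ n) : DStage P W m ⊆ DStage P W n := by
  induction h with
  | refl => exact subset_rfl
  | step _ ih => exact ih.trans (DStage_mono_succ _)

lemma DStage_head {c : α} {n : ℕ} (h : c ∈ DStage P W n) :
    ∃ r ∈ P, r.head = c := by
  induction n with
  | zero => exact absurd h (by simp [DStage])
  | succ n ih =>
    rcases h with h | ⟨r, hr, hh, -, -⟩
    · exact ih h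
    · exact ⟨r, hr, hh⟩

lemma DStage_mem_HB {c : α} {n : ℕ} (h : c ∈ DStage P W n) : c ∈ HB P := by
  obtain ⟨r, hr, rfl⟩ := DStage_head h
  exact head_mem_HB hr

lemma mem_Dlim {c : α} : c ∈ Dlim P W ↔ ∃ n, c ∈ DStage P W n := Set.mem_iUnion

lemma Dlim_mem_HB {c : α} (h : c ∈ Dlim P W) : c ∈ HB P := by
  rcases mem_Dlim.1 h with ⟨n, hn⟩; exact DStage_mem_HB hn

/-- From a statement with vulnerabilities inside `W` to a derivation. -/
lemma stmt_to_deriv {c : α} {V : Finset α} {R : Finset (Rule α)}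
    (h : IsStatement P c V R) (hV : ↑V ⊆ W) : c ∈ Dlim P W := by
  classical
  induction h with
  | mk r hr v ρ hsub hnr ih =>
    have hneg : ↑r.bodyNeg ⊆ W := fun b hb =>
      hV (Finset.mem_coe.2 (Finset.mem_union_right _ (Finset.mem_coe.1 hb)))
    have key : ∀ a ∈ r.bodyPos, ∃ n, a ∈ DStage P W n := by
      intro a ha
      refine mem_Dlim.1 (ih a ha (fun b hb => hV ?_))
      exact Finset.mem_coe.2 (Finset.mem_union_left _
        (Finset.mem_biUnion.2 ⟨a, ha, Finset.mem_coe.1 hb⟩))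
    set g : α → ℕ := fun a => if h : ∃ n, a ∈ DStage P W n then h.choose else 0 with hg
    set N : ℕ := r.bodyPos.sup g with hN
    have hpos : ↑r.bodyPos ⊆ DStage P W N := by
      intro a ha
      have ha' := Finset.mem_coe.1 ha
      have hex := key a ha'
      have : a ∈ DStage P W (g a) := by
        simp only [hg, dif_pos hex]
        exact hex.choose_spec
      exact DStage_mono (Finset.le_sup ha') this
    exact mem_Dlim.2 ⟨N + 1, Or.inr ⟨r, hr, rfl, hneg, hpos⟩⟩

end DStageLemmas

/-- From a derivation to a statement with small vulnerabilities. -/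
lemma deriv_to_stmt : ∀ (P : NLP α) (W : Set α) (c : α),
    c ∈ Dlim P W → ∃ V R, IsStatement P c V R ∧ ↑V ⊆ W := by
  classical
  intro P
  induction P using Finset.strongInduction with
  | _ P ih =>
    intro W c hc
    have hne : ∃ n, c ∈ DStage P W n := mem_Dlim.1 hc
    have hc0 : c ∈ DStage P W (Nat.find hne) := Nat.find_spec hne
    have hn0 : Nat.find hne ≠ 0 := by
      intro h0
      rw [h0] at hc0
      exact absurd hc0 (by simp [DStage])
    obtain ⟨m, hm⟩ := Nat.exists_eq_succ_of_ne_zero hn0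
    rw [hm] at hc0
    have hcm : c ∉ DStage P W m := Nat.find_min hne (by omega)
    rcases hc0 with h' | ⟨r, hr, hhead, hneg, hpos⟩
    · exact absurd h' hcm
    have claimA : ∀ k, k ≤ m → DStage P W k ⊆ DStage (P.erase r) W k := by
      intro k
      induction k with
      | zero => intro _; simp [DStage]
      | succ k ihk =>
        intro hk x hx
        have hk' : k ≤ m := Nat.le_of_succ_le hk
        rcases hx with hx | ⟨r', hr', hh', hn', hp'⟩
        · exact DStage_mono_succ _ (ihk hk' hx)
        · have hrr : r' ≠ r := by
            rintro rfl
            exact hcm (DStage_mono hk (Or.inr ⟨r', hr', hhead, hn', hp'⟩))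
          exact Or.inr ⟨r', Finset.mem_erase.2 ⟨hrr, hr'⟩, hh', hn',
            fun a ha => ihk hk' (hp' ha)⟩
    have hsubargs : ∀ a ∈ r.bodyPos, ∃ V R, IsStatement (P.erase r) a V R ∧ ↑V ⊆ W := by
      intro a ha
      have haD : a ∈ DStage (P.erase r) W m :=
        claimA m le_rfl (hpos (Finset.mem_coe.2 ha))
      exact ih (P.erase r) (Finset.erase_ssubset hr) W a (mem_Dlim.2 ⟨m, haD⟩)
    choose! V' R' hstmt hVW using hsubargs
    refine ⟨r.bodyPos.biUnion V' ∪ r.bodyNeg, insert r (r.bodyPos.biUnion R'), ?_, ?_⟩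
    · have hres := IsStatement.mk (P := P) r hr V' R'
        (fun a ha => stmt_mono (hstmt a ha) (Finset.erase_subset _ _))
        (fun a ha hmem =>
          (Finset.mem_erase.1 (stmt_rules_subset (hstmt a ha) hmem)).1 rfl)
      rwa [hhead] at hres
    · intro b hb
      rcases Finset.mem_union.1 (Finset.mem_coe.1 hb) with hb' | hb'
      · rcases Finset.mem_biUnion.1 hb' with ⟨a, ha, hba⟩
        exact hVW a ha (Finset.mem_coe.2 hba)
      · exact hneg (Finset.mem_coe.2 hb')

lemma mem_Dlim_iff_stmt {P : NLP α} {W : Set α} {c : α} :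
    c ∈ Dlim P W ↔ ∃ V R, IsStatement P c V R ∧ ↑V ⊆ W :=
  ⟨deriv_to_stmt P W c, fun ⟨_, _, h, hV⟩ => stmt_to_deriv h hV⟩

/- ===================== PsiIter facts ===================== -/

section Psi
variable {H : Finset α} {Q : Set (PosRule α)}

lemma psiIter_step (H : Finset α) (Q : Set (PosRule α)) :
    ∀ n, (PsiIter H Q n).T ⊆ (PsiIter H Q (n + 1)).T ∧
      (PsiIter H Q (n + 1)).F ⊆ (PsiIter H Q n).F := by
  intro n
  induction n with
  | zero =>
    constructor
    · intro c hc; exact absurd hc (by simp [PsiIter])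
    · intro c hc; exact hc.1
  | succ n ih =>
    constructor
    · rintro c ⟨hcH, q, hq, hh, hu, hb⟩
      exact ⟨hcH, q, hq, hh, hu, fun a ha => ih.1 (hb a ha)⟩
    · rintro c ⟨hcH, hall⟩
      refine ⟨hcH, fun q hq hh => ?_⟩
      obtain ⟨a, ha, haF⟩ := hall q hq hh
      exact ⟨a, ha, ih.2 haF⟩

lemma psiIter_T_mono {m n : ℕ} (h : m ≤ n) :
    (PsiIter H Q m).T ⊆ (PsiIter H Q n).T := by
  induction h with
  | refl => exact subset_rfl
  | step _ ih => exact ih.trans (psiIter_step H Q _).1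

lemma psiIter_F_anti {m n : ℕ} (h : m ≤ n) :
    (PsiIter H Q n).F ⊆ (PsiIter H Q m).F := by
  induction h with
  | refl => exact subset_rfl
  | step _ ih => exact ((psiIter_step H Q _).2).trans ih

end Psi

/- ============ characterizations of the Omega operator ============ -/

section Omega
variable {P : NLP α} {J : Interp α}

lemma psi_T_subset_D :
    ∀ n, (PsiIter (HB P) (reduct P J) n).T ⊆ DStage P J.F n := by
  intro n
  induction n with
  | zero => intro c hc; exact absurd hc (by simp [PsiIter])
  | succ n ih =>
    rintro c ⟨hcH, q, hq, hqh, hqu, hqb⟩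
    obtain ⟨r, hr, hnT, hh, hbp, hU⟩ := hq
    refine Or.inr ⟨r, hr, by rw [← hh, hqh], ?_, ?_⟩
    · intro b hb
      by_contra hbF
      exact hqu (hU.2 ⟨b, Finset.mem_coe.1 hb, hbF⟩)
    · intro a ha
      exact ih (hqb a (by rw [hbp]; exact Finset.mem_coe.1 ha))

lemma D_subset_psi_T (hdis : Disjoint J.T J.F) :
    ∀ n, DStage P J.F n ⊆ (PsiIter (HB P) (reduct P J) n).T := by
  intro n
  induction n with
  | zero => intro c hc; exact absurd hc (by simp [DStage])
  | succ n ih =>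
    rintro c (hc | ⟨r, hr, hh, hneg, hpos⟩)
    · exact (psiIter_step _ _ n).1 (ih hc)
    · refine ⟨hh ▸ head_mem_HB hr,
        ⟨r.head, r.bodyPos, ∃ b ∈ r.bodyNeg, b ∉ J.F⟩,
        ⟨r, hr, ?_, rfl, rfl, Iff.rfl⟩, hh, ?_, ?_⟩
      · intro b hb hbT
        exact Set.disjoint_left.1 hdis hbT (hneg (Finset.mem_coe.2 hb))
      · rintro ⟨b, hb, hbF⟩
        exact hbF (hneg (Finset.mem_coe.2 hb))
      · intro a ha
        exact ih (hpos (Finset.mem_coe.2 ha))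

lemma psi_F_iff :
    ∀ n, ∀ c ∈ HB P,
      (c ∉ (PsiIter (HB P) (reduct P J) n).F ↔
        c ∈ DStage P {b | b ∉ J.T} n) := by
  intro n
  induction n with
  | zero =>
    intro c hc
    simp [PsiIter, DStage, hc]
  | succ n ih =>
    intro c hc
    constructor
    · intro hnotF
      have : ¬ (c ∈ HB P ∧ ∀ q ∈ reduct P J, q.head = c →
          ∃ a ∈ q.bodyPos, a ∈ (PsiIter (HB P) (reduct P J) n).F) := hnotF
      push_neg at this
      obtain ⟨q, hq, hqh, hall⟩ := this hc
      obtain ⟨r, hr, hnT, hh, hbp, -⟩ := hq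
      refine Or.inr ⟨r, hr, by rw [← hh, hqh], ?_, ?_⟩
      · intro b hb
        exact hnT b (Finset.mem_coe.1 hb)
      · intro a ha
        have ha' : a ∈ r.bodyPos := Finset.mem_coe.1 ha
        have haH : a ∈ HB P := bodyPos_mem_HB hr ha'
        exact (ih a haH).1 (hall a (by rw [hbp]; exact ha'))
    · intro hD
      rcases hD with hD | ⟨r, hr, hh, hneg, hpos⟩
      · intro hF
        have hc' : c ∉ (PsiIter (HB P) (reduct P J) n).F := (ih c hc).2 hD
        exact hc' ((psiIter_step _ _ n).2 hF)
      · rintro ⟨-, hall⟩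
        obtain ⟨a, ha, haF⟩ := hall
          ⟨r.head, r.bodyPos, ∃ b ∈ r.bodyNeg, b ∉ J.F⟩
          ⟨r, hr, (fun b hb => hneg (Finset.mem_coe.2 hb)), rfl, rfl, Iff.rfl⟩ hh
        have haH : a ∈ HB P := bodyPos_mem_HB hr ha
        exact (ih a haH).2 (hpos (Finset.mem_coe.2 ha)) haF

lemma omegaT_eq (hdis : Disjoint J.T J.F) :
    (OmegaOp (HB P) P J).T = Dlim P J.F := by
  apply Set.Subset.antisymm
  · exact Set.iUnion_subset fun n =>
      (psi_T_subset_D n).trans (Set.subset_iUnion (DStage P J.F) n)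
  · exact Set.iUnion_subset fun n =>
      (D_subset_psi_T hdis n).trans
        (Set.subset_iUnion (fun n => (PsiIter (HB P) (reduct P J) n).T) n)

lemma omegaF_eq :
    (OmegaOp (HB P) P J).F = ↑(HB P) \ Dlim P {b | b ∉ J.T} := by
  ext c
  constructor
  · intro hc
    have hc' : ∀ n, c ∈ (PsiIter (HB P) (reduct P J) n).F := Set.mem_iInter.1 hc
    have hcH : c ∈ HB P := by
      have h0 := hc' 0
      simpa [PsiIter] using h0
    refine ⟨hcH, ?_⟩
    intro hmem
    rcases mem_Dlim.1 hmem with ⟨n, hn⟩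
    exact (psi_F_iff n c hcH).2 hn (hc' n)
  · rintro ⟨hcH, hnot⟩
    refine Set.mem_iInter.2 fun n => ?_
    by_contra hF
    exact hnot (mem_Dlim.2 ⟨n, (psi_F_iff n c (Finset.mem_coe.1 hcH)).1 hF⟩)

end Omega

/- ===================== args / attacks ===================== -/

section Args
variable {P : NLP α}

lemma argsOf_subset_HB : argsOf P ⊆ HB P := by
  classical
  unfold argsOf
  intro x hx
  exact (Finset.mem_filter.1 hx).1

lemma mem_argsOf {c : α} : c ∈ argsOf P ↔ c ∈ HB P ∧ IsArg P c := by
  classical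
  unfold argsOf
  rw [Finset.mem_filter]

lemma setafOf_att {B : Finset α} {a : α} :
    (setafOf P).att B a ↔ B ⊆ argsOf P ∧ a ∈ argsOf P ∧ HitsVul P B a ∧
      ∀ B', B' ⊂ B → ¬ HitsVul P B' a := Iff.rfl

lemma setafOf_args : (setafOf P).args = argsOf P := rfl

lemma exists_min_subset {Φ : Finset α → Prop} :
    ∀ B : Finset α, Φ B → ∃ B', B' ⊆ B ∧ Φ B' ∧ ∀ B'', B'' ⊂ B' → ¬ Φ B'' := by
  classical
  intro B
  induction B using Finset.strongInduction with
  | _ B ih =>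
    intro hB
    by_cases h : ∃ B'', B'' ⊂ B ∧ Φ B''
    · rcases h with ⟨B'', hsub, hΦ⟩
      rcases ih B'' hsub hΦ with ⟨B', h1, h2, h3⟩
      exact ⟨B', h1.trans hsub.subset, h2, h3⟩
    · exact ⟨B, subset_rfl, hB, fun B'' hB'' hΦ => h ⟨B'', hB'', hΦ⟩⟩

lemma exists_attacker {C : Finset α} {a : α}
    (hC : C ⊆ argsOf P) (ha : a ∈ argsOf P) (hhit : HitsVul P C a) :
    ∃ B, (setafOf P).att B a ∧ B ⊆ C := by
  rcases exists_min_subset (Φ := fun B => HitsVul P B a) C hhit with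
    ⟨B, hsub, hhit', hmin⟩
  exact ⟨B, ⟨hsub.trans hC, ha, hhit', hmin⟩, hsub⟩

/-- Either some vulnerability set lies inside `G`, or there is an attacker
entirely outside `G`. -/
lemma exists_vul_or_attacker {a : α} (ha : a ∈ argsOf P) (G : Set α)
    (hG : ∀ b ∈ HB P, b ∉ G → b ∈ argsOf P) :
    (∃ V R, IsStatement P a V R ∧ ↑V ⊆ G) ∨
      ∃ B, (setafOf P).att B a ∧ ∀ b ∈ B, b ∉ G := by
  classical
  by_cases hex : ∃ V R, IsStatement P a V R ∧ ↑V ⊆ G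
  · exact Or.inl hex
  · right
    push_neg at hex
    set C : Finset α := (HB P).filter (fun b => b ∉ G) with hC
    have hCargs : C ⊆ argsOf P := by
      intro b hb
      rw [hC, Finset.mem_filter] at hb
      exact hG b hb.1 hb.2
    have hhit : HitsVul P C a := by
      intro V R hst
      obtain ⟨b, hbV, hbG⟩ : ∃ b ∈ V, b ∉ G := by
        by_contra hcon
        push_neg at hcon
        exact hex V R hst (fun b hb => hcon b (Finset.mem_coe.1 hb))
      refine ⟨b, ?_, hbV⟩
      rw [hC, Finset.mem_filter]
      exact ⟨stmt_vul_subset_HB hst hbV, hbG⟩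
    obtain ⟨B, hatt, hBC⟩ := exists_attacker hCargs ha hhit
    refine ⟨B, hatt, fun b hb => ?_⟩
    have := hBC hb
    rw [hC, Finset.mem_filter] at this
    exact this.2

end Args

/- ===================== I2L / L2I lemmas ===================== -/

section Labels
variable {P : NLP α} {J : Interp α} {L : α → Lab}

lemma I2L_eq_inn {c : α} : I2L J c = Lab.inn ↔ c ∈ J.T := by
  classical
  unfold I2L
  split_ifs with h1 h2 <;> simp_all

lemma I2L_eq_out {c : α} : I2L J c = Lab.out ↔ c ∉ J.T ∧ c ∈ J.F := by
  classical
  unfold I2L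
  split_ifs with h1 h2 <;> simp_all

lemma I2L_eq_und {c : α} : I2L J c = Lab.und ↔ c ∉ J.T ∧ c ∉ J.F := by
  classical
  unfold I2L
  split_ifs with h1 h2 <;> simp_all

lemma mem_L2I_T {c : α} :
    c ∈ (L2I P L).T ↔ c ∈ HB P ∧ c ∈ argsOf P ∧ L c = Lab.inn := Iff.rfl

lemma mem_L2I_F {c : α} :
    c ∈ (L2I P L).F ↔ c ∈ HB P ∧ (c ∉ argsOf P ∨ (c ∈ argsOf P ∧ L c = Lab.out)) :=
  Iff.rfl

lemma L2I_disjoint : Disjoint (L2I P L).T (L2I P L).F := by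
  rw [Set.disjoint_left]
  rintro c ⟨h1, h2, h3⟩ ⟨h1', h2'⟩
  rcases h2' with h | ⟨-, h⟩
  · exact h h2
  · rw [h3] at h; cases h

lemma Interp.ext' {I₁ I₂ : Interp α} (h1 : I₁.T = I₂.T) (h2 : I₁.F = I₂.F) :
    I₁ = I₂ := by
  cases I₁; cases I₂; simp_all

end Labels


/- ===================== Core correspondence ===================== -/

section Core
variable {P : NLP α} {L : α → Lab} {J : Interp α}

lemma core1 (hL : CompleteLab (setafOf P) L) : IsPSModel (HB P) P (L2I P L) := by
  classical
  have hdis : Disjoint (L2I P L).T (L2I P L).F := L2I_disjoint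
  have hTeq : (OmegaOp (HB P) P (L2I P L)).T = (L2I P L).T := by
    rw [omegaT_eq hdis]
    ext c
    constructor
    · intro hc
      rcases mem_Dlim_iff_stmt.1 hc with ⟨V, R, hst, hVW⟩
      have hcH : c ∈ HB P := stmt_head_mem_HB hst
      have harg : c ∈ argsOf P := mem_argsOf.2 ⟨hcH, V, R, hst⟩
      refine ⟨hcH, harg, ?_⟩
      rcases hcase : L c with _ | _ | _
      · rfl
      · obtain ⟨B, hatt, hallinn⟩ := (hL.1 c harg).2 hcase
        obtain ⟨b, hbB, hbV⟩ := hatt.2.2.1 V R hst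
        have hbF : b ∈ (L2I P L).F := hVW (Finset.mem_coe.2 hbV)
        rcases hbF.2 with h | ⟨-, h⟩
        · exact absurd (hatt.1 hbB) h
        · rw [hallinn b hbB] at h; cases h
      · obtain ⟨⟨B, hatt, hno⟩, -⟩ := hL.2 c harg hcase
        obtain ⟨b, hbB, hbV⟩ := hatt.2.2.1 V R hst
        have hbF : b ∈ (L2I P L).F := hVW (Finset.mem_coe.2 hbV)
        rcases hbF.2 with h | ⟨-, h⟩
        · exact absurd (hatt.1 hbB) h
        · exact absurd h (hno b hbB)
    · rintro ⟨hcH, hcarg, hcinn⟩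
      have hG : ∀ b ∈ HB P, b ∉ (L2I P L).F → b ∈ argsOf P := by
        intro b hbH hbF
        by_contra hbarg
        exact hbF ⟨hbH, Or.inl hbarg⟩
      rcases exists_vul_or_attacker hcarg (L2I P L).F hG with
        ⟨V, R, hst, hVG⟩ | ⟨B, hatt, hne⟩
      · exact mem_Dlim_iff_stmt.2 ⟨V, R, hst, hVG⟩
      · obtain ⟨b, hbB, hbout⟩ := (hL.1 c hcarg).1 hcinn B hatt
        exact absurd ⟨argsOf_subset_HB (hatt.1 hbB),
          Or.inr ⟨hatt.1 hbB, hbout⟩⟩ (hne b hbB)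
  have hFeq : (OmegaOp (HB P) P (L2I P L)).F = (L2I P L).F := by
    rw [omegaF_eq]
    ext c
    constructor
    · rintro ⟨hcH, hnD⟩
      have hcH' : c ∈ HB P := Finset.mem_coe.1 hcH
      refine ⟨hcH', ?_⟩
      by_cases harg : c ∈ argsOf P
      · refine Or.inr ⟨harg, ?_⟩
        have hG : ∀ b ∈ HB P, b ∉ {b | b ∉ (L2I P L).T} → b ∈ argsOf P := by
          intro b hbH hb
          exact (not_not.1 hb).2.1
        rcases hcase : L c with _ | _ | _
        · exfalso
          rcases exists_vul_or_attacker harg {b | b ∉ (L2I P L).T} hG with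
            ⟨V, R, hst, hVG⟩ | ⟨B, hatt, hin⟩
          · exact hnD (mem_Dlim_iff_stmt.2 ⟨V, R, hst, hVG⟩)
          · obtain ⟨b, hbB, hbout⟩ := (hL.1 c harg).1 hcase B hatt
            have hbT : b ∈ (L2I P L).T := not_not.1 (hin b hbB)
            rw [hbT.2.2] at hbout; cases hbout
        · rfl
        · exfalso
          rcases exists_vul_or_attacker harg {b | b ∉ (L2I P L).T} hG with
            ⟨V, R, hst, hVG⟩ | ⟨B, hatt, hin⟩
          · exact hnD (mem_Dlim_iff_stmt.2 ⟨V, R, hst, hVG⟩)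
          · obtain ⟨-, hforall⟩ := hL.2 c harg hcase
            obtain ⟨b, hbB, hbnin⟩ := hforall B hatt
            exact hbnin (not_not.1 (hin b hbB)).2.2
      · exact Or.inl harg
    · rintro ⟨hcH, hcase⟩
      refine ⟨Finset.mem_coe.2 hcH, fun hmem => ?_⟩
      rcases mem_Dlim_iff_stmt.1 hmem with ⟨V, R, hst, hVG⟩
      have harg : c ∈ argsOf P := mem_argsOf.2 ⟨hcH, V, R, hst⟩
      rcases hcase with h | ⟨-, hout⟩
      · exact h harg
      · obtain ⟨B, hatt, hallinn⟩ := (hL.1 c harg).2 hout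
        obtain ⟨b, hbB, hbV⟩ := hatt.2.2.1 V R hst
        have hbT : b ∈ (L2I P L).T :=
          ⟨argsOf_subset_HB (hatt.1 hbB), hatt.1 hbB, hallinn b hbB⟩
        exact (hVG (Finset.mem_coe.2 hbV)) hbT
  exact ⟨⟨fun c hc => Finset.mem_coe.2 hc.1, fun c hc => Finset.mem_coe.2 hc.1, hdis⟩,
    Interp.ext' hTeq hFeq⟩

lemma core2 (hJ : IsPSModel (HB P) P J) :
    CompleteLab (setafOf P) (I2L J) ∧ L2I P (I2L J) = J := by
  classical
  obtain ⟨⟨hTsub, hFsub, hdis⟩, hfix⟩ := hJ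
  have hT : J.T = Dlim P J.F :=
    (congrArg Interp.T hfix).symm.trans (omegaT_eq hdis)
  have hF : J.F = ↑(HB P) \ Dlim P {b | b ∉ J.T} :=
    (congrArg Interp.F hfix).symm.trans omegaF_eq
  have F1 : ∀ c ∈ J.T, c ∈ argsOf P := by
    intro c hc
    rw [hT] at hc
    rcases mem_Dlim_iff_stmt.1 hc with ⟨V, R, hst, -⟩
    exact mem_argsOf.2 ⟨stmt_head_mem_HB hst, V, R, hst⟩
  have ND : ∀ c, c ∈ Dlim P {b | b ∉ J.T} ↔ (c ∈ HB P ∧ c ∉ J.F) := by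
    intro c
    constructor
    · intro hc
      refine ⟨Dlim_mem_HB hc, fun hcF => ?_⟩
      rw [hF] at hcF
      exact hcF.2 hc
    · rintro ⟨hcH, hcF⟩
      by_contra hnot
      apply hcF
      rw [hF]
      exact ⟨Finset.mem_coe.2 hcH, hnot⟩
  have F2 : ∀ c ∈ HB P, c ∉ J.F → c ∈ argsOf P := by
    intro c hcH hcF
    rcases mem_Dlim_iff_stmt.1 ((ND c).2 ⟨hcH, hcF⟩) with ⟨V, R, hst, -⟩
    exact mem_argsOf.2 ⟨hcH, V, R, hst⟩
  have hEq : L2I P (I2L J) = J := by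
    refine Interp.ext' ?_ ?_
    · ext c
      constructor
      · rintro ⟨hcH, hcarg, hinn⟩
        exact I2L_eq_inn.1 hinn
      · intro hc
        exact ⟨Finset.mem_coe.1 (hTsub hc), F1 c hc, I2L_eq_inn.2 hc⟩
    · ext c
      constructor
      · rintro ⟨hcH, hcase⟩
        rcases hcase with h | ⟨-, hout⟩
        · by_contra hcF
          exact h (F2 c hcH hcF)
        · exact (I2L_eq_out.1 hout).2
      · intro hc
        refine ⟨Finset.mem_coe.1 (hFsub hc), ?_⟩
        by_cases harg : c ∈ argsOf P
        · exact Or.inr ⟨harg, I2L_eq_out.2 ⟨Set.disjoint_right.1 hdis hc, hc⟩⟩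
        · exact Or.inl harg
  refine ⟨⟨?_, ?_⟩, hEq⟩
  · intro a ha
    constructor
    · intro hinn B hatt
      have haT : a ∈ J.T := I2L_eq_inn.1 hinn
      have haD : a ∈ Dlim P J.F := by rw [← hT]; exact haT
      rcases mem_Dlim_iff_stmt.1 haD with ⟨V, R, hst, hVF⟩
      obtain ⟨b, hbB, hbV⟩ := hatt.2.2.1 V R hst
      have hbF : b ∈ J.F := hVF (Finset.mem_coe.2 hbV)
      exact ⟨b, hbB, I2L_eq_out.2 ⟨Set.disjoint_right.1 hdis hbF, hbF⟩⟩
    · intro hout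
      obtain ⟨haT, haF⟩ := I2L_eq_out.1 hout
      have hG : ∀ b ∈ HB P, b ∉ {b | b ∉ J.T} → b ∈ argsOf P := fun b hbH hb =>
        F1 b (not_not.1 hb)
      rcases exists_vul_or_attacker ha {b | b ∉ J.T} hG with
        ⟨V, R, hst, hVG⟩ | ⟨B, hatt, hin⟩
      · exfalso
        have haD : a ∈ Dlim P {b | b ∉ J.T} := mem_Dlim_iff_stmt.2 ⟨V, R, hst, hVG⟩
        exact ((ND a).1 haD).2 haF
      · exact ⟨B, hatt, fun b hbB => I2L_eq_inn.2 (not_not.1 (hin b hbB))⟩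
  · intro a ha hund
    obtain ⟨haT, haF⟩ := I2L_eq_und.1 hund
    constructor
    · rcases exists_vul_or_attacker ha J.F F2 with ⟨V, R, hst, hVG⟩ | ⟨B, hatt, hnF⟩
      · exfalso
        apply haT
        rw [hT]
        exact mem_Dlim_iff_stmt.2 ⟨V, R, hst, hVG⟩
      · exact ⟨B, hatt, fun b hbB hbout => hnF b hbB (I2L_eq_out.1 hbout).2⟩
    · intro B hatt
      have haD : a ∈ Dlim P {b | b ∉ J.T} :=
        (ND a).2 ⟨argsOf_subset_HB ha, haF⟩
      rcases mem_Dlim_iff_stmt.1 haD with ⟨V, R, hst, hVG⟩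
      obtain ⟨b, hbB, hbV⟩ := hatt.2.2.1 V R hst
      exact ⟨b, hbB, fun hbinn => (hVG (Finset.mem_coe.2 hbV)) (I2L_eq_inn.1 hbinn)⟩

end Core

/- ===================== top-level glue ===================== -/

lemma unionTF (P : NLP α) (L : α → Lab) :
    (L2I P L).T ∪ (L2I P L).F = ↑(HB P) \ labUnd (setafOf P) L := by
  ext c
  constructor
  · rintro (⟨h1, h2, h3⟩ | ⟨h1, h2⟩)
    · exact ⟨Finset.mem_coe.2 h1, fun hu => absurd hu.2 (by simp [h3])⟩
    · refine ⟨Finset.mem_coe.2 h1, fun hu => ?_⟩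
      rcases h2 with h | ⟨-, h⟩
      · exact h hu.1
      · rw [hu.2] at h; cases h
  · rintro ⟨hcH, hnund⟩
    have hcH' := Finset.mem_coe.1 hcH
    by_cases harg : c ∈ argsOf P
    · rcases hcase : L c with _ | _ | _
      · exact Or.inl ⟨hcH', harg, hcase⟩
      · exact Or.inr ⟨hcH', Or.inr ⟨harg, hcase⟩⟩
      · exact absurd ⟨harg, hcase⟩ hnund
    · exact Or.inr ⟨hcH', Or.inl harg⟩

lemma labUnd_subset_HB (P : NLP α) (L : α → Lab) :
    labUnd (setafOf P) L ⊆ ↑(HB P) := fun a ha =>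
  Finset.mem_coe.2 (argsOf_subset_HB ha.1)

lemma diff_sub_iff {H X Y : Set α} (hY : Y ⊆ H) :
    H \ X ⊆ H \ Y ↔ Y ⊆ X := by
  constructor
  · intro h y hy
    by_contra hyX
    exact (h ⟨hY hy, hyX⟩).2 hy
  · rintro h x ⟨hxH, hxX⟩
    exact ⟨hxH, fun hxY => hxX (h hxY)⟩

lemma diff_ssub_iff {H X Y : Set α} (hX : X ⊆ H) (hY : Y ⊆ H) :
    H \ X ⊂ H \ Y ↔ Y ⊂ X := by
  rw [ssubset_iff_subset_not_subset, ssubset_iff_subset_not_subset,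
    diff_sub_iff hY, diff_sub_iff hX]

lemma complete_agree {P : NLP α} {L L' : α → Lab} (h : ∀ a ∈ argsOf P, L a = L' a)
    (hL : CompleteLab (setafOf P) L) : CompleteLab (setafOf P) L' := by
  obtain ⟨hadm, hund⟩ := hL
  constructor
  · intro a ha
    have hE : L a = L' a := h a ha
    constructor
    · intro hin B hB
      obtain ⟨b, hb, hbout⟩ := (hadm a ha).1 (hE.trans hin) B hB
      exact ⟨b, hb, (h b (hB.1 hb)).symm.trans hbout⟩
    · intro hout
      obtain ⟨B, hB, hall⟩ := (hadm a ha).2 (hE.trans hout)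
      exact ⟨B, hB, fun b hb => (h b (hB.1 hb)).symm.trans (hall b hb)⟩
  · intro a ha hu
    have hE : L a = L' a := h a ha
    obtain ⟨⟨B, hB, hno⟩, hforall⟩ := hund a ha (hE.trans hu)
    constructor
    · exact ⟨B, hB, fun b hb hbout => hno b hb ((h b (hB.1 hb)).trans hbout)⟩
    · intro B' hB'
      obtain ⟨b, hb, hbnin⟩ := hforall B' hB'
      exact ⟨b, hb, fun hbin => hbnin ((h b (hB'.1 hb)).trans hbin)⟩

lemma I2L_L2I_agree (P : NLP α) (L : α → Lab) :
    ∀ a ∈ argsOf P, I2L (L2I P L) a = L a := by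
  intro a ha
  have haH : a ∈ HB P := argsOf_subset_HB ha
  rcases hcase : L a with _ | _ | _
  · exact I2L_eq_inn.2 ⟨haH, ha, hcase⟩
  · exact I2L_eq_out.2 ⟨fun hT => absurd hT.2.2 (by simp [hcase]),
      ⟨haH, Or.inr ⟨ha, hcase⟩⟩⟩
  · refine I2L_eq_und.2 ⟨fun hT => absurd hT.2.2 (by simp [hcase]), fun hF => ?_⟩
    rcases hF.2 with hh | ⟨-, hh⟩
    · exact hh ha
    · rw [hcase] at hh; cases hh


theorem stmt7 (P : NLP α) (L : α → Lab) :
    SemiStableLab (setafOf P) L ↔ IsLStableModel (HB P) P (L2I P L) := by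
  classical
  constructor
  · rintro ⟨hc, hmin⟩
    refine ⟨core1 hc, ?_⟩
    intro J hJ hss
    obtain ⟨hcJ, hLJ⟩ := core2 hJ
    have h1 := unionTF P L
    have h2 : J.T ∪ J.F = ↑(HB P) \ labUnd (setafOf P) (I2L J) := by
      conv_lhs => rw [← hLJ]
      exact unionTF P (I2L J)
    rw [h1, h2] at hss
    exact hmin (I2L J) hcJ
      ((diff_ssub_iff (labUnd_subset_HB P L) (labUnd_subset_HB P (I2L J))).1 hss)
  · rintro ⟨hps, hmax⟩
    have hcomp : CompleteLab (setafOf P) L :=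
      complete_agree (I2L_L2I_agree P L) (core2 hps).1
    refine ⟨hcomp, ?_⟩
    intro L' hL' hss
    refine hmax (L2I P L') (core1 hL') ?_
    rw [unionTF P L, unionTF P L']
    exact (diff_ssub_iff (labUnd_subset_HB P L) (labUnd_subset_HB P L')).2 hss
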